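/- Let Ω ⊂ ℂⁿ be a domain, φ ∈ C¹(Ω) real-valued, and g = (g₁,…,g_m) holomorphic on Ω with |g(z)|² := Σ_k |g_k(z)|² > 0 everywhere. Let ω = (ω_{kν})_{1≤k≤m, 1≤ν≤n} with each ω_{kν} ∈ C¹(Ω), and assume Σ_{k=1}^m g_k(z) ω_{kν}(z) = 0 for all z ∈ Ω and all ν. Define (T*_φω)_k := Σ_ν (ω_{kν} ∂φ/∂z_ν − ∂ω_{kν}/∂z_ν) and Φ_gω := ( Σ_{k,ν} ∂(g_k/|g|²)/∂z_ν · ω_{kν} ) · (ḡ₁,…,ḡ_m). Then for every z ∈ Ω: (i) Σ_{k=1}^m g_k(z) ((T*_φω)_k(z) − (Φ_gω)_k(z)) = 0; (ii) Φ_gω(z) is orthogonal, with respect to the standard Hermitian inner product on ℂ^m, to every u ∈ ℂ^m with Σ_k g_k(z) u_k = 0. Consequently T*_φω(z) − Φ_gω(z) is the orthogonal projection of T*_φω(z) onto the subspace {u ∈ ℂ^m : Σ_k g_k(z) u_k = 0}. -/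

import Mathlib

open MeasureTheory Filter Complex Set Bornology ENNReal

noncomputable section

/-- ℂⁿ with the Euclidean metric. -/
abbrev Cn (n : ℕ) : Type := EuclideanSpace ℂ (Fin n)


instance {n : ℕ} : MeasurableSpace (Cn n) := borel _
instance {n : ℕ} : BorelSpace (Cn n) := ⟨rfl⟩
instance {n : ℕ} : MeasureSpace (Cn n) :=
  letI : InnerProductSpace ℝ (Cn n) := InnerProductSpace.complexToReal
  measureSpaceOfInnerProductSpace

/-- The `j`-th standard basis vector of ℂⁿ. -/
def sdir {n : ℕ} (j : Fin n) : Cn n := EuclideanSpace.single j 1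

/-- Wirtinger derivative `∂f/∂z_j`. -/
def wder {n : ℕ} (j : Fin n) (f : Cn n → ℂ) (z : Cn n) : ℂ :=
  (fderiv ℝ f z (sdir j) - Complex.I * fderiv ℝ f z (Complex.I • sdir j)) / 2

/-- Conjugate Wirtinger derivative `∂f/∂z̄_j`. -/
def wbar {n : ℕ} (j : Fin n) (f : Cn n → ℂ) (z : Cn n) : ℂ :=
  (fderiv ℝ f z (sdir j) + Complex.I * fderiv ℝ f z (Complex.I • sdir j)) / 2

/-- Complex Hessian `∂²f/∂z_j∂z̄_k`. -/
def hessC {n : ℕ} (j k : Fin n) (f : Cn n → ℂ) (z : Cn n) : ℂ :=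
  wder j (fun w => wbar k f w) z

/-- Levi form `Σ_{j,k} (∂²φ/∂z_j∂z̄_k) ξ_j ξ̄_k` of a real-valued function. -/
def levi {n : ℕ} (φ : Cn n → ℝ) (z : Cn n) (ξ : Fin n → ℂ) : ℝ :=
  (∑ j, ∑ k, hessC j k (fun w => (φ w : ℂ)) z * ξ j * (starRingEnd ℂ) (ξ k)).re

/-- Euclidean Laplacian on ℂⁿ ≅ ℝ^{2n}. -/
def lap {n : ℕ} (φ : Cn n → ℝ) (z : Cn n) : ℝ :=
  ∑ j, (fderiv ℝ (fun w => fderiv ℝ φ w (sdir j)) z (sdir j)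
    + fderiv ℝ (fun w => fderiv ℝ φ w (Complex.I • sdir j)) z (Complex.I • sdir j))

/-- Squared norm of the real gradient `|∇φ|²`. -/
def gradSq {n : ℕ} (φ : Cn n → ℝ) (z : Cn n) : ℝ :=
  ∑ j, ((fderiv ℝ φ z (sdir j)) ^ 2 + (fderiv ℝ φ z (Complex.I • sdir j)) ^ 2)

/-- `ρ` is a `C²` defining function for the bounded open set `Ω ⊂ ℂⁿ`:
`ρ` is real-valued and `C²` on a neighborhood `U` of the closure of `Ω`,
`Ω = {ρ < 0}`, and `∇ρ ≠ 0` on `∂Ω`. -/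
structure IsDefining {n : ℕ} (Ω : Set (Cn n)) (ρ : Cn n → ℝ) : Prop where
  isOpen : IsOpen Ω
  bounded : IsBounded Ω
  exU : ∃ U : Set (Cn n), IsOpen U ∧ closure Ω ⊆ U ∧ ContDiffOn ℝ 2 ρ U ∧
    Ω = {z | z ∈ U ∧ ρ z < 0}
  grad_ne : ∀ z ∈ frontier Ω, fderiv ℝ ρ z ≠ 0

/-- Squared Hardy norm `‖f‖²_{H²(Ω)} = limsup_{ε→0⁺} ∫_{∂Ω_ε} |f|² dσ_ε`,
where `∂Ω_ε` carries the `(2n-1)`-dimensional Hausdorff measure. -/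
def hardySq {n : ℕ} (Ω : Set (Cn n)) (ρ : Cn n → ℝ) (f : Cn n → ℂ) : ℝ≥0∞ :=
  Filter.limsup
    (fun ε : ℝ =>
      ∫⁻ z in frontier {w | w ∈ Ω ∧ ρ w < -ε}, ENNReal.ofReal (‖f z‖ ^ 2)
        ∂ μH[2 * (n : ℝ) - 1])
    (nhdsWithin 0 (Set.Ioi 0))

/-- `f` belongs to the Hardy space `H²(Ω)`. -/
def MemHardy {n : ℕ} (Ω : Set (Cn n)) (ρ : Cn n → ℝ) (f : Cn n → ℂ) : Prop :=
  DifferentiableOn ℂ f Ω ∧ hardySq Ω ρ f < ⊤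

/-- The subdomain `Ω_ε = {z ∈ Ω : ρ(z) < -ε}`. -/
def subdom {n : ℕ} (Ω : Set (Cn n)) (ρ : Cn n → ℝ) (ε : ℝ) : Set (Cn n) :=
  {w | w ∈ Ω ∧ ρ w < -ε}

/-- The `k`-th component of `T*_φω`, namely `Σ_ν (ω_{kν} ∂φ/∂z_ν - ∂ω_{kν}/∂z_ν)`. -/
def TstarComp {n m : ℕ} (φ : Cn n → ℝ) (ω : Fin m → Fin n → Cn n → ℂ)
    (k : Fin m) (z : Cn n) : ℂ :=
  ∑ ν, (ω k ν z * wder ν (fun w => (φ w : ℂ)) z - wder ν (ω k ν) z)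

/-- The `k`-th component of `Φ_gω = (Σ_{i,ν} ∂(g_i/|g|²)/∂z_ν ⋅ ω_{iν}) ⋅ ḡ`. -/
def PhiComp {n m : ℕ} (g : Fin m → Cn n → ℂ) (ω : Fin m → Fin n → Cn n → ℂ)
    (k : Fin m) (z : Cn n) : ℂ :=
  (∑ i, ∑ ν, wder ν (fun w => g i w / ((∑ l, ‖g l w‖ ^ 2 : ℝ) : ℂ)) z * ω i ν z)
    * (starRingEnd ℂ) (g k z)

/-!
Differentiating `Σ_k g_k ω_{kν} = 0` gives `Σ_k g_k ∂ω_{kν}/∂z_ν = -Σ_k (∂g_k/∂z_ν) ω_{kν}`, so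
`⟨T*_φω, ḡ⟩ = Σ_{k,ν} (∂g_k/∂z_ν) ω_{kν}`. Since `Σ_k g_k ω_{kν} = 0` also kills the term coming from
the derivative of `1/|g|²`, the scalar `c` with `Φ_gω = c ḡ` equals `⟨T*_φω, ḡ⟩ / |g|²`. Hence `Φ_gω` is
the component of `T*_φω` along `ḡ`, which is orthogonal to `{u : Σ_k g_k u_k = 0}`, and
Pythagoras gives the minimality.
-/

open scoped ComplexConjugate

section Pythagoras

variable {ι : Type*} [Fintype ι]

lemma sum_norm_sq_add_of_sum_mul_conj_eq_zero (p d : ι → ℂ)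
    (h : ∑ k, p k * conj (d k) = 0) :
    ∑ k, ‖p k + d k‖ ^ 2 = ∑ k, ‖p k‖ ^ 2 + ∑ k, ‖d k‖ ^ 2 := by
  have hre : ∑ k, (p k * conj (d k)).re = 0 := by rw [← Complex.re_sum, h, Complex.zero_re]
  simp only [← Complex.normSq_eq_norm_sq, Complex.normSq_add, Finset.sum_add_distrib,
    ← Finset.mul_sum, hre, mul_zero, add_zero]

lemma sum_norm_sq_le_of_sum_mul_conj_sub_eq_zero (a p u : ι → ℂ)
    (h : ∑ k, p k * conj (a k - p k - u k) = 0) :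
    ∑ k, ‖p k‖ ^ 2 ≤ ∑ k, ‖a k - u k‖ ^ 2 := by
  have hsplit : ∀ k, a k - u k = p k + (a k - p k - u k) := fun k => by ring
  simp only [hsplit, sum_norm_sq_add_of_sum_mul_conj_eq_zero _ _ h]
  exact le_add_of_nonneg_right (Finset.sum_nonneg fun k _ => sq_nonneg _)

end Pythagoras

section Wirtinger

variable {n : ℕ} (ν : Fin n) {z : Cn n}

lemma wder_congr {f h : Cn n → ℂ} (hfh : f =ᶠ[nhds z] h) : wder ν f z = wder ν h z := by
  unfold wder; rw [hfh.fderiv_eq]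

lemma wder_mul {f h : Cn n → ℂ} (hf : DifferentiableAt ℝ f z) (hh : DifferentiableAt ℝ h z) :
    wder ν (fun w => f w * h w) z = wder ν f z * h z + f z * wder ν h z := by
  unfold wder
  rw [fderiv_fun_mul hf hh]
  simp only [_root_.add_apply, _root_.smul_apply, smul_eq_mul]
  ring

lemma wder_sum {ι : Type*} (s : Finset ι) {f : ι → Cn n → ℂ}
    (hf : ∀ i ∈ s, DifferentiableAt ℝ (f i) z) :
    wder ν (fun w => ∑ i ∈ s, f i w) z = ∑ i ∈ s, wder ν (f i) z := by
  unfold wder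
  rw [fderiv_fun_sum hf]
  simp only [_root_.sum_apply]
  rw [Finset.mul_sum, ← Finset.sum_sub_distrib, ← Finset.sum_div]

lemma sum_wder_mul_add_mul_wder_eq_zero {ι : Type*} [Fintype ι] {f h : ι → Cn n → ℂ}
    (hf : ∀ k, DifferentiableAt ℝ (f k) z) (hh : ∀ k, DifferentiableAt ℝ (h k) z)
    (h0 : (fun w => ∑ k, f k w * h k w) =ᶠ[nhds z] fun _ => 0) :
    ∑ k, (wder ν (f k) z * h k z + f k z * wder ν (h k) z) = 0 := by
  calc ∑ k, (wder ν (f k) z * h k z + f k z * wder ν (h k) z)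
      = ∑ k, wder ν (fun w => f k w * h k w) z :=
        Finset.sum_congr rfl fun k _ => (wder_mul ν (hf k) (hh k)).symm
    _ = wder ν (fun w => ∑ k, f k w * h k w) z :=
        (wder_sum ν Finset.univ fun k _ => (hf k).mul (hh k)).symm
    _ = 0 := by rw [wder_congr ν h0]; simp [wder]

end Wirtinger

section Projection

variable {n m : ℕ} (φ : Cn n → ℝ) (g : Fin m → Cn n → ℂ) (ω : Fin m → Fin n → Cn n → ℂ)
  {z : Cn n}

def phiCoeff (z : Cn n) : ℂ :=
  ∑ i, ∑ ν, wder ν (fun w => g i w / ((∑ l, ‖g l w‖ ^ 2 : ℝ) : ℂ)) z * ω i ν z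

lemma PhiComp_eq (k : Fin m) : PhiComp g ω k z = phiCoeff g ω z * conj (g k z) := rfl

lemma sum_mul_PhiComp :
    ∑ k, g k z * PhiComp g ω k z = phiCoeff g ω z * ((∑ l, ‖g l z‖ ^ 2 : ℝ) : ℂ) := by
  simp only [PhiComp_eq, Complex.ofReal_sum, Complex.ofReal_pow, Finset.mul_sum,
    ← Complex.mul_conj']
  exact Finset.sum_congr rfl fun k _ => by ring

lemma sum_mul_TstarComp (hg : ∀ k, DifferentiableAt ℝ (g k) z)
    (hω : ∀ k ν, DifferentiableAt ℝ (ω k ν) z)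
    (hker : ∀ ν, (fun w => ∑ k, g k w * ω k ν w) =ᶠ[nhds z] fun _ => 0) :
    ∑ k, g k z * TstarComp φ ω k z = ∑ ν, ∑ k, wder ν (g k) z * ω k ν z := by
  simp only [TstarComp, Finset.mul_sum]
  rw [Finset.sum_comm]
  refine Finset.sum_congr rfl fun ν _ => ?_
  have hker_z : ∑ k, g k z * ω k ν z = 0 := (hker ν).eq_of_nhds
  have hder := sum_wder_mul_add_mul_wder_eq_zero ν hg (fun k => hω k ν) (hker ν)
  rw [Finset.sum_add_distrib] at hder
  calc ∑ k, g k z * (ω k ν z * wder ν (fun w => (φ w : ℂ)) z - wder ν (ω k ν) z)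
      = (∑ k, g k z * ω k ν z) * wder ν (fun w => (φ w : ℂ)) z
          - ∑ k, g k z * wder ν (ω k ν) z := by
        rw [Finset.sum_mul, ← Finset.sum_sub_distrib]
        exact Finset.sum_congr rfl fun k _ => by ring
    _ = ∑ k, wder ν (g k) z * ω k ν z := by
        rw [hker_z]
        linear_combination -hder

lemma phiCoeff_mul_normSq (hg : ∀ k, DifferentiableAt ℝ (g k) z)
    (hpos : ∑ l, ‖g l z‖ ^ 2 ≠ 0) (hker : ∀ ν, ∑ k, g k z * ω k ν z = 0) :
    phiCoeff g ω z * ((∑ l, ‖g l z‖ ^ 2 : ℝ) : ℂ) = ∑ ν, ∑ k, wder ν (g k) z * ω k ν z := by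
  set q : Cn n → ℂ := fun w => ((∑ l, ‖g l w‖ ^ 2 : ℝ) : ℂ)
  have hqz : q z ≠ 0 := Complex.ofReal_ne_zero.mpr hpos
  have hsum : DifferentiableAt ℝ (fun w => ∑ l, ‖g l w‖ ^ 2) z :=
    DifferentiableAt.fun_sum fun l _ => (hg l).norm_sq ℂ
  have hq : DifferentiableAt ℝ q z := Complex.ofRealCLM.differentiableAt.comp z hsum
  have hquot : ∀ i ν, wder ν (fun w => g i w / q w) z
      = wder ν (g i) z * (q z)⁻¹ + g i z * wder ν (fun w => (q w)⁻¹) z := fun i ν => by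
    simp only [div_eq_mul_inv]
    exact wder_mul ν (hg i) (hq.inv hqz)
  have hcoeff : phiCoeff g ω z = (∑ ν, ∑ k, wder ν (g k) z * ω k ν z) * (q z)⁻¹ := by
    rw [phiCoeff, Finset.sum_comm, Finset.sum_mul]
    refine Finset.sum_congr rfl fun ν _ => ?_
    calc ∑ i, wder ν (fun w => g i w / q w) z * ω i ν z
        = (∑ i, wder ν (g i) z * ω i ν z) * (q z)⁻¹
            + wder ν (fun w => (q w)⁻¹) z * ∑ i, g i z * ω i ν z := by
          simp only [hquot, Finset.sum_mul, Finset.mul_sum, ← Finset.sum_add_distrib]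
          exact Finset.sum_congr rfl fun i _ => by ring
      _ = _ := by rw [hker ν, mul_zero, add_zero]
  rw [hcoeff, inv_mul_cancel_right₀ hqz]

end Projection

theorem ohsawa_projection_general {n m : ℕ} (Ω : Set (Cn n)) (hΩ : IsOpen Ω)
    (φ : Cn n → ℝ)
    (g : Fin m → Cn n → ℂ) (hg : ∀ k, DifferentiableOn ℂ (g k) Ω)
    (hpos : ∀ z ∈ Ω, 0 < ∑ k, ‖g k z‖ ^ 2)
    (ω : Fin m → Fin n → Cn n → ℂ) (hω : ∀ k ν, ContDiffOn ℝ 1 (ω k ν) Ω)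
    (hker : ∀ z ∈ Ω, ∀ ν : Fin n, ∑ k, g k z * ω k ν z = 0)
    (z : Cn n) (hz : z ∈ Ω) :
    (∑ k, g k z * (TstarComp φ ω k z - PhiComp g ω k z) = 0) ∧
    (∀ u : Fin m → ℂ, (∑ k, g k z * u k) = 0 →
      ∑ k, PhiComp g ω k z * (starRingEnd ℂ) (u k) = 0) ∧
    (∀ u : Fin m → ℂ, (∑ k, g k z * u k) = 0 →
      ∑ k, ‖TstarComp φ ω k z - (TstarComp φ ω k z - PhiComp g ω k z)‖ ^ 2
        ≤ ∑ k, ‖TstarComp φ ω k z - u k‖ ^ 2) := by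
  have hzΩ : Ω ∈ nhds z := hΩ.mem_nhds hz
  have hgz : ∀ k, DifferentiableAt ℝ (g k) z := fun k =>
    ((hg k).differentiableAt hzΩ).restrictScalars ℝ
  have hωz : ∀ k ν, DifferentiableAt ℝ (ω k ν) z := fun k ν =>
    ((hω k ν).differentiableOn one_ne_zero).differentiableAt hzΩ
  have hker_near : ∀ ν, (fun w => ∑ k, g k w * ω k ν w) =ᶠ[nhds z] fun _ => 0 := fun ν =>
    Filter.eventually_of_mem hzΩ fun w hw => hker w hw ν
  have hdiff_ker : ∑ k, g k z * (TstarComp φ ω k z - PhiComp g ω k z) = 0 := by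
    simp only [mul_sub, Finset.sum_sub_distrib, sum_mul_PhiComp,
      sum_mul_TstarComp φ g ω hgz hωz hker_near,
      phiCoeff_mul_normSq g ω hgz (hpos z hz).ne' (hker z hz), sub_self]
  have hPhi_orth : ∀ u : Fin m → ℂ, (∑ k, g k z * u k) = 0 →
      ∑ k, PhiComp g ω k z * conj (u k) = 0 := fun u hu => by
    simp only [PhiComp_eq, mul_assoc, ← map_mul, ← Finset.mul_sum, ← map_sum, hu, map_zero,
      mul_zero]
  refine ⟨hdiff_ker, hPhi_orth, fun u hu => ?_⟩
  simp only [_root_.sub_sub_cancel]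
  refine sum_norm_sq_le_of_sum_mul_conj_sub_eq_zero _ _ _ (hPhi_orth _ ?_)
  simp only [mul_sub, Finset.sum_sub_distrib] at hdiff_ker hu ⊢
  rw [hdiff_ker, hu, sub_zero]

/-- **Ohsawa's lemma** (Lemma 4.1, pointwise form). If `g ⋅ ω = 0`, then at each `z ∈ Ω`:
(i) `g ⋅ (T*_φω - Φ_gω) = 0`; (ii) `Φ_gω ⊥ {u : g ⋅ u = 0}`; consequently
`T*_φω - Φ_gω` is the orthogonal projection of `T*_φω` onto `{u : g ⋅ u = 0}`,
i.e. it minimizes the distance from `T*_φω` to that subspace. -/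
theorem ohsawa_projection {n m : ℕ} (Ω : Set (Cn n)) (hΩ : IsOpen Ω) (hconn : IsConnected Ω)
    (φ : Cn n → ℝ) (hφ : ContDiffOn ℝ 1 φ Ω)
    (g : Fin m → Cn n → ℂ) (hg : ∀ k, DifferentiableOn ℂ (g k) Ω)
    (hpos : ∀ z ∈ Ω, 0 < ∑ k, ‖g k z‖ ^ 2)
    (ω : Fin m → Fin n → Cn n → ℂ) (hω : ∀ k ν, ContDiffOn ℝ 1 (ω k ν) Ω)
    (hker : ∀ z ∈ Ω, ∀ ν : Fin n, ∑ k, g k z * ω k ν z = 0)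
    (z : Cn n) (hz : z ∈ Ω) :
    (∑ k, g k z * (TstarComp φ ω k z - PhiComp g ω k z) = 0) ∧
    (∀ u : Fin m → ℂ, (∑ k, g k z * u k) = 0 →
      ∑ k, PhiComp g ω k z * (starRingEnd ℂ) (u k) = 0) ∧
    (∀ u : Fin m → ℂ, (∑ k, g k z * u k) = 0 →
      ∑ k, ‖TstarComp φ ω k z - (TstarComp φ ω k z - PhiComp g ω k z)‖ ^ 2
        ≤ ∑ k, ‖TstarComp φ ω k z - u k‖ ^ 2) :=
  ohsawa_projection_general Ω hΩ φ g hg hpos ω hω hker z hz
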